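/- Pointwise on the underlying probability space, for every index j' with 0 ≤ j' ≤ T−1, b_{j'} ≠ 0 and j'/T ≤ 1/2, one has |ỹ(j'/T)| ≥ |b_{j'}| − π·B·U₂ − sup_{v∈[0,1/2]} |ε̃(v)|. -/

import Mathlib

/-!
Substituting `μ` into the DFT gives `ỹ(j'/T) = Σⱼ bⱼ Kₙ(j/T - j'/T) + ε̃(j'/T)`, where `Kₙ` is the
normalised geometric sum `leakageKernel`, with `Kₙ(0) = 1`. For `j ≠ j'` at circular distance `d`
from `j'` modulo `T`, the geometric-sum bound and Jordan's inequality give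
`|Kₙ| ≤ T / (2nd) < 1 / (4gd) ≤ (π/2) A_{2dg-1}`, using `2gT < n` and `A_m ≥ 1 / (π(m+1))`.
Each `d` comes from at most two `j`, and `4gd < n` keeps `d ≤ ⌊(n-1)/(4g)⌋`, so the leakage
costs at most `π B U₂`; the noise costs at most its supremum.
-/

open MeasureTheory ProbabilityTheory Complex Real

/-- `A_m := sup{ |sin(πν)|/(πν) : ν ∈ [m, m+1] }`. -/
noncomputable def sideLobeBound (m : ℕ) : ℝ :=
  ⨆ ν ∈ Set.Icc (m : ℝ) ((m : ℝ) + 1), |Real.sin (Real.pi * ν)| / (Real.pi * ν)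

/-- `U₂ := Σ_{j=1}^{⌊(n−1)/(4g)⌋} A_{2jg−1}`. -/
noncomputable def leakageU₂ (n g : ℕ) : ℝ :=
  ∑ j ∈ Finset.Icc (1 : ℤ) ⌊((n : ℝ) - 1) / (4 * g)⌋,
    sideLobeBound ((2 * j).toNat * g - 1)

open Finset

theorem Finset.sum_comp_le_nsmul_sum {ι κ M : Type*} [DecidableEq κ] [AddCommMonoid M]
    [PartialOrder M] [IsOrderedAddMonoid M] {s : Finset ι} {t : Finset κ} {f : κ → M}
    {g : ι → κ} {k : ℕ} (hf : ∀ b ∈ t, 0 ≤ f b) (hg : ∀ a ∈ s, g a ∈ t)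
    (hfiber : ∀ b ∈ t, #{a ∈ s | g a = b} ≤ k) :
    ∑ a ∈ s, f (g a) ≤ k • ∑ b ∈ t, f b := by
  have himage : s.image g ⊆ t := fun b hb => by
    obtain ⟨a, ha, rfl⟩ := mem_image.1 hb
    exact hg a ha
  rw [sum_comp, smul_sum]
  calc ∑ b ∈ s.image g, #{a ∈ s | g a = b} • f b
      ≤ ∑ b ∈ s.image g, k • f b :=
        sum_le_sum fun b hb => nsmul_le_nsmul_left (hf b (himage hb)) (hfiber b (himage hb))
    _ ≤ ∑ b ∈ t, k • f b :=
        sum_le_sum_of_subset_of_nonneg himage fun b hb _ => nsmul_nonneg (hf b hb) k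

theorem le_biSup_of_forall_le {α β : Type*} [ConditionallyCompleteLattice β] {f : α → β}
    {S : Set α} {C : β} (hC : ∀ y ∈ S, f y ≤ C) {x : α} (hx : x ∈ S) :
    f x ≤ ⨆ y ∈ S, f y :=
  le_ciSup₂ (f := fun y (_ : y ∈ S) => f y)
    ⟨C, by
      simp only [mem_upperBounds, Set.mem_iUnion, Set.mem_range]
      rintro _ ⟨y, hy, rfl⟩
      exact hC y hy⟩ x hx

theorem Real.two_mul_abs_sub_int_le_abs_sin {x : ℝ} (k : ℤ) (h : |x - k| ≤ 1 / 2) :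
    2 * |x - k| ≤ |Real.sin (π * x)| := by
  have hjordan : 2 * |x - k| ≤ Real.sin (π * |x - k|) := by
    have := Real.mul_le_sin (x := π * |x - k|) (by positivity) (by nlinarith [pi_pos])
    rwa [← mul_assoc, div_mul_cancel₀ _ pi_ne_zero] at this
  have hshift : |Real.sin (π * x)| = |Real.sin (π * (x - k))| := by
    rw [show π * x = π * (x - k) + k * π by ring, Real.sin_add_int_mul_pi, abs_mul,
      abs_neg_one_zpow, one_mul]
  rw [hshift]
  refine hjordan.trans ?_
  rcases abs_cases (x - k) with ⟨habs, _⟩ | ⟨habs, _⟩ <;> rw [habs]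
  · exact le_abs_self _
  · rw [mul_neg, Real.sin_neg]
    exact neg_le_abs _

theorem sideLobeBound_nonneg (m : ℕ) : 0 ≤ sideLobeBound m :=
  Real.iSup_nonneg fun _ => Real.iSup_nonneg fun hν =>
    div_nonneg (abs_nonneg _) (mul_nonneg pi_pos.le ((Nat.cast_nonneg m).trans hν.1))

theorem one_div_pi_mul_le_sideLobeBound (m : ℕ) :
    1 / (π * (m + 1)) ≤ sideLobeBound m := by
  have hsinc_le_one : ∀ ν ∈ Set.Icc (m : ℝ) (m + 1), |Real.sin (π * ν)| / (π * ν) ≤ 1 :=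
    fun ν hν => by
      have hπν : 0 ≤ π * ν := mul_nonneg pi_pos.le ((Nat.cast_nonneg m).trans hν.1)
      exact div_le_one_of_le₀ (Real.abs_sin_le_abs.trans (abs_of_nonneg hπν).le) hπν
  have hmid : (m : ℝ) + 1 / 2 ∈ Set.Icc (m : ℝ) (m + 1) := ⟨by linarith, by linarith⟩
  have hpeak : |Real.sin (π * (m + 1 / 2))| = 1 := by
    rw [show π * (m + 1 / 2) = π / 2 + (m : ℤ) * π by push_cast; ring,
      Real.sin_add_int_mul_pi, Real.sin_pi_div_two, mul_one, abs_neg_one_zpow]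
  refine le_trans ?_ (le_biSup_of_forall_le hsinc_le_one hmid)
  rw [hpeak]
  gcongr
  linarith

/-- `ỹ` of the pure tone `t ↦ exp(2πi f t)` at frequency `v` is `leakageKernel n (f - v)`. -/
noncomputable def leakageKernel (n : ℕ) (x : ℝ) : ℂ :=
  (1 / (n : ℂ)) * ∑ t : Fin n, Complex.exp (2 * π * I * x * ((t : ℕ) + 1))

theorem leakageKernel_zero {n : ℕ} (hn : n ≠ 0) : leakageKernel n 0 = 1 := by
  simp [leakageKernel, hn]

theorem norm_geom_sum_le {z : ℂ} (hz : ‖z‖ = 1) (hz1 : z ≠ 1) (n : ℕ) :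
    ‖∑ t ∈ range n, z ^ t‖ ≤ 2 / ‖z - 1‖ := by
  rw [geom_sum_eq hz1, norm_div]
  gcongr
  calc ‖z ^ n - 1‖ ≤ ‖z ^ n‖ + ‖(1 : ℂ)‖ := norm_sub_le _ _
    _ = 2 := by rw [norm_pow, hz]; norm_num

theorem norm_exp_two_pi_I_mul_sub_one (x : ℝ) :
    ‖Complex.exp (2 * π * I * x) - 1‖ = 2 * |Real.sin (π * x)| := by
  rw [show 2 * π * I * x = I * ((2 * π * x : ℝ) : ℂ) by push_cast; ring,
    Complex.norm_exp_I_mul_ofReal_sub_one, norm_mul, Real.norm_eq_abs,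
    show 2 * π * x / 2 = π * x by ring]
  norm_num

theorem norm_leakageKernel_le {n : ℕ} {x : ℝ} (hx : Real.sin (π * x) ≠ 0) :
    ‖leakageKernel n x‖ ≤ 1 / (n * |Real.sin (π * x)|) := by
  have hz : ‖Complex.exp (2 * π * I * x)‖ = 1 := by
    rw [show 2 * π * I * x = ((2 * π * x : ℝ) : ℂ) * I by push_cast; ring]
    exact Complex.norm_exp_ofReal_mul_I _
  set z := Complex.exp (2 * π * I * x)
  have hz1 : ‖z - 1‖ = 2 * |Real.sin (π * x)| := norm_exp_two_pi_I_mul_sub_one x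
  have hz1_ne : z ≠ 1 := fun h => by simp [h, hx] at hz1
  have hsum : ∑ t : Fin n, Complex.exp (2 * π * I * x * ((t : ℕ) + 1))
      = z * ∑ t ∈ range n, z ^ t := by
    rw [mul_sum, ← Fin.sum_univ_eq_sum_range]
    refine sum_congr rfl fun t _ => ?_
    rw [← pow_succ', ← Complex.exp_nat_mul]
    push_cast
    ring_nf
  rw [leakageKernel, hsum, norm_mul, norm_mul, hz, one_mul, norm_div, norm_one,
    Complex.norm_natCast]
  calc 1 / (n : ℝ) * ‖∑ t ∈ range n, z ^ t‖ ≤ 1 / n * (2 / ‖z - 1‖) := by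
        gcongr
        exact norm_geom_sum_le hz hz1_ne n
    _ = 1 / (n * |Real.sin (π * x)|) := by rw [hz1]; field_simp

theorem norm_dft_le (n : ℕ) (a : Fin n → ℝ) (v : ℝ) :
    ‖(1 / (n : ℂ)) * ∑ t : Fin n, (a t : ℂ) * Complex.exp (-(2 * π * I * v * ((t : ℕ) + 1)))‖
      ≤ 1 / n * ∑ t : Fin n, |a t| := by
  rw [norm_mul, norm_div, norm_one, Complex.norm_natCast]
  gcongr
  refine (norm_sum_le _ _).trans (le_of_eq (sum_congr rfl fun t _ => ?_))
  rw [norm_mul, Complex.norm_real, Real.norm_eq_abs, Complex.norm_exp]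
  simp

theorem dft_trigSum_eq_sum_mul_leakageKernel (n T : ℕ) (b : ℕ → ℂ) (v : ℝ) :
    (1 / (n : ℂ)) * ∑ t : Fin n, (∑ j ∈ range T,
        b j * Complex.exp (2 * π * I * j * (((t : ℕ) + 1 : ℕ) : ℂ) / T)) *
        Complex.exp (-(2 * π * I * v * ((t : ℕ) + 1)))
      = ∑ j ∈ range T, b j * leakageKernel n (j / T - v) := by
  simp only [leakageKernel, sum_mul, mul_sum]
  rw [sum_comm]
  refine sum_congr rfl fun j _ => sum_congr rfl fun t _ => ?_
  have hexp : Complex.exp (2 * π * I * j * (((t : ℕ) + 1 : ℕ) : ℂ) / T) *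
      Complex.exp (-(2 * π * I * v * ((t : ℕ) + 1)))
      = Complex.exp (2 * π * I * ((j / T - v : ℝ) : ℂ) * ((t : ℕ) + 1)) := by
    rw [← Complex.exp_add]
    push_cast
    ring_nf
  linear_combination (1 / (n : ℂ) * b j) * hexp

def circDist (T i j : ℕ) : ℕ := min (i - j + (j - i)) (T - (i - j + (j - i)))

theorem circDist_pos_of_ne {T i j : ℕ} (hi : i < T) (hj : j < T) (hij : i ≠ j) :
    0 < circDist T i j := by
  unfold circDist; omega

theorem two_mul_circDist_le (T i j : ℕ) : 2 * circDist T i j ≤ T := by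
  unfold circDist; omega

theorem exists_int_abs_sub_eq_circDist {T i j : ℕ} (hi : i < T) (hj : j < T) :
    ∃ k : ℤ, |(i : ℝ) / T - j / T - k| = circDist T i j / T := by
  have hT : (T : ℝ) ≠ 0 := by exact_mod_cast (show T ≠ 0 by omega)
  obtain ⟨k, hk⟩ : ∃ k : ℤ, |(i : ℤ) - j - k * T| = circDist T i j := by
    simp only [abs_eq (Int.natCast_nonneg _)]
    unfold circDist
    by_cases hji : j ≤ i <;> by_cases hnear : 2 * (i - j + (j - i)) ≤ T
    exacts [⟨0, by omega⟩, ⟨1, by omega⟩, ⟨0, by omega⟩, ⟨-1, by omega⟩]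
  refine ⟨k, ?_⟩
  rw [show (i : ℝ) / T - j / T - k = ((i : ℤ) - j - k * T : ℤ) / T by push_cast; field_simp,
    abs_div, ← Int.cast_abs, hk, Nat.abs_cast]
  rfl

theorem card_filter_circDist_eq_le_two {T j : ℕ} (hj : j < T) (d : ℕ) :
    #{i ∈ range T | circDist T i j = d} ≤ 2 := by
  refine (card_le_card fun i hi => ?_).trans
    (card_le_two (a := if j + d < T then j + d else j + d - T)
      (b := if d ≤ j then j - d else j + T - d))
  obtain ⟨hiT, hid⟩ := mem_filter.1 hi
  rw [mem_range] at hiT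
  unfold circDist at hid
  rw [mem_insert, mem_singleton]
  split_ifs <;> omega

theorem norm_leakageKernel_le_circDist {n T i j : ℕ} (hi : i < T) (hj : j < T) (hij : i ≠ j) :
    ‖leakageKernel n (i / T - j / T)‖ ≤ T / (2 * n * circDist T i j) := by
  obtain ⟨k, hk⟩ := exists_int_abs_sub_eq_circDist hi hj
  have hT : (0 : ℝ) < T := by exact_mod_cast (show 0 < T by omega)
  have hd : (0 : ℝ) < circDist T i j := by exact_mod_cast circDist_pos_of_ne hi hj hij
  have hdT : 2 * (circDist T i j : ℝ) ≤ T := by exact_mod_cast two_mul_circDist_le T i j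
  have hsin := Real.two_mul_abs_sub_int_le_abs_sin k (by
    rw [hk, div_le_iff₀ hT]; linarith)
  rw [hk] at hsin
  have hsin_pos : 0 < |Real.sin (π * (i / T - j / T))| := lt_of_lt_of_le (by positivity) hsin
  rcases Nat.eq_zero_or_pos n with rfl | hn
  · simp [leakageKernel]
  calc ‖leakageKernel n (i / T - j / T)‖ ≤ 1 / (n * |Real.sin (π * (i / T - j / T))|) :=
        norm_leakageKernel_le (abs_pos.1 hsin_pos)
    _ ≤ 1 / (n * (2 * (circDist T i j / T))) := by gcongr
    _ = T / (2 * n * circDist T i j) := by field_simp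

theorem norm_leakageKernel_le_sideLobeBound {n g T i j : ℕ} (hg : 0 < g) (hgT : 2 * g * T < n)
    (hi : i < T) (hj : j < T) (hij : i ≠ j) :
    ‖leakageKernel n (i / T - j / T)‖ ≤ π / 2 * sideLobeBound (2 * circDist T i j * g - 1) := by
  set d := circDist T i j
  have hd : 0 < d := circDist_pos_of_ne hi hj hij
  have hgT' : 2 * (g : ℝ) * T < n := by exact_mod_cast hgT
  have hm : ((2 * d * g - 1 : ℕ) : ℝ) + 1 = 2 * d * g := by
    rw [Nat.cast_sub (Nat.mul_pos (Nat.mul_pos two_pos hd) hg), Nat.cast_one, sub_add_cancel]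
    push_cast
    ring
  have hlobe := one_div_pi_mul_le_sideLobeBound (2 * d * g - 1)
  rw [hm] at hlobe
  have hdpos : (0 : ℝ) < d := by exact_mod_cast hd
  have hgpos : (0 : ℝ) < g := by exact_mod_cast hg
  have hnpos : (0 : ℝ) < n := by linarith [hgT', show (0 : ℝ) ≤ 2 * g * T by positivity]
  calc ‖leakageKernel n (i / T - j / T)‖ ≤ T / (2 * n * d) :=
        norm_leakageKernel_le_circDist hi hj hij
    _ ≤ 1 / (4 * g * d) := by
        rw [div_le_div_iff₀ (by positivity) (by positivity)]
        nlinarith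
    _ = π / 2 * (1 / (π * (2 * d * g))) := by field_simp; ring
    _ ≤ π / 2 * sideLobeBound (2 * d * g - 1) := by gcongr

theorem sum_norm_leakageKernel_le {n g T j : ℕ} (hg : 0 < g) (hgT : 2 * g * T < n) (hj : j < T) :
    ∑ i ∈ (range T).erase j, ‖leakageKernel n (i / T - j / T)‖ ≤ π * leakageU₂ n g := by
  set s := (range T).erase j
  set G : ℤ → ℝ := fun k => sideLobeBound ((2 * k).toNat * g - 1)
  have hmem : ∀ i ∈ s, i < T ∧ i ≠ j := fun i hi =>
    ⟨mem_range.1 (mem_of_mem_erase hi), ne_of_mem_erase hi⟩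
  have hterm : ∀ i ∈ s, ‖leakageKernel n (i / T - j / T)‖ ≤ π / 2 * G (circDist T i j) :=
    fun i hi => by
      simpa [G, show (2 * (circDist T i j : ℤ)).toNat = 2 * circDist T i j by omega] using
        norm_leakageKernel_le_sideLobeBound hg hgT (hmem i hi).1 hj (hmem i hi).2
  have hmaps : ∀ i ∈ s, (circDist T i j : ℤ) ∈ Icc 1 ⌊((n : ℝ) - 1) / (4 * g)⌋ := fun i hi => by
    have hd := two_mul_circDist_le T i j
    have hlt : 4 * g * circDist T i j + 1 ≤ n := by nlinarith
    refine mem_Icc.2 ⟨by exact_mod_cast circDist_pos_of_ne (hmem i hi).1 hj (hmem i hi).2, ?_⟩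
    rw [Int.le_floor, le_div_iff₀ (by positivity)]
    have : (4 * g * circDist T i j : ℝ) + 1 ≤ n := by exact_mod_cast hlt
    push_cast
    linarith
  have hfiber : ∀ k ∈ Icc 1 ⌊((n : ℝ) - 1) / (4 * g)⌋, #{i ∈ s | (circDist T i j : ℤ) = k} ≤ 2 :=
    fun k hk => by
      lift k to ℕ using (mem_Icc.1 hk).1.trans' zero_le_one
      simp only [Nat.cast_inj]
      exact (card_le_card (filter_subset_filter _ (erase_subset j _))).trans
        (card_filter_circDist_eq_le_two hj k)
  calc ∑ i ∈ s, ‖leakageKernel n (i / T - j / T)‖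
      ≤ ∑ i ∈ s, π / 2 * G (circDist T i j) := sum_le_sum hterm
    _ = π / 2 * ∑ i ∈ s, G (circDist T i j) := (mul_sum _ _ _).symm
    _ ≤ π / 2 * (2 • leakageU₂ n g) := by
        gcongr
        exact sum_comp_le_nsmul_sum (fun k _ => sideLobeBound_nonneg _) hmaps hfiber
    _ = π * leakageU₂ n g := by rw [nsmul_eq_mul]; ring

theorem norm_sum_mul_leakageKernel_le {n g T j : ℕ} {b : ℕ → ℂ} {B : ℝ} (hg : 0 < g)
    (hgT : 2 * g * T < n) (hj : j < T) (hb : ∀ i < T, ‖b i‖ ≤ B) :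
    ‖∑ i ∈ (range T).erase j, b i * leakageKernel n (i / T - j / T)‖ ≤ π * B * leakageU₂ n g := by
  have hB : 0 ≤ B := (norm_nonneg _).trans (hb j hj)
  calc ‖∑ i ∈ (range T).erase j, b i * leakageKernel n (i / T - j / T)‖
      ≤ ∑ i ∈ (range T).erase j, B * ‖leakageKernel n (i / T - j / T)‖ := by
        refine (norm_sum_le _ _).trans (sum_le_sum fun i hi => ?_)
        rw [norm_mul]
        gcongr
        exact hb i (mem_range.1 (mem_of_mem_erase hi))
    _ ≤ B * (π * leakageU₂ n g) := by
        rw [← mul_sum]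
        gcongr
        exact sum_norm_leakageKernel_le hg hgT hj
    _ = π * B * leakageU₂ n g := by ring

theorem periodogram_lower_bound_at_present_frequency_general
    {Ω : Type*}
    (n : ℕ) (hn : 0 < n)
    (ε : Fin n → Ω → ℝ)
    (εdft : ℝ → Ω → ℂ)
    (hεdft : ∀ v ω, εdft v ω = (1 / (n : ℂ)) *
        ∑ t : Fin n, (ε t ω : ℂ) * Complex.exp (-(2 * Real.pi * Complex.I * v * ((t : ℕ) + 1))))
    (g T : ℕ) (hg2 : 2 ≤ g)
    (hTn : (T : ℝ) < n / (2 * g))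
    (b : ℕ → ℂ)
    (μ : ℕ → ℂ)
    (hμ : ∀ t, μ t = ∑ j ∈ Finset.range T,
        b j * Complex.exp (2 * Real.pi * Complex.I * j * t / T))
    (ydft : ℝ → Ω → ℂ)
    (hydft : ∀ v ω, ydft v ω = (1 / (n : ℂ)) *
        ∑ t : Fin n, (μ ((t : ℕ) + 1) + (ε t ω : ℂ)) *
          Complex.exp (-(2 * Real.pi * Complex.I * v * ((t : ℕ) + 1))))
    (B : ℝ) (hB : IsGreatest {x : ℝ | ∃ j < T, b j ≠ 0 ∧ x = ‖b j‖} B) :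
    ∀ ω : Ω, ∀ j' : ℕ, j' < T → b j' ≠ 0 → (j' : ℝ) / T ≤ 1 / 2 →
      ‖b j'‖ - Real.pi * B * leakageU₂ n g -
          (⨆ v ∈ Set.Icc (0 : ℝ) (1 / 2), ‖εdft v ω‖) ≤
        ‖ydft ((j' : ℝ) / T) ω‖ := by
  intro ω j' hj' _ hhalf
  have hg : 0 < g := by omega
  have hgT : 2 * g * T < n := by
    have := (lt_div_iff₀ (by positivity : (0 : ℝ) < 2 * g)).1 hTn
    exact_mod_cast (by linarith : (2 * g * T : ℝ) < n)
  have hb : ∀ j < T, ‖b j‖ ≤ B := fun j hj => by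
    by_cases hbj : b j = 0
    · obtain ⟨_, _, _, rfl⟩ := hB.1
      simp [hbj]
    · exact hB.2 ⟨j, hj, hbj, rfl⟩
  set S := ∑ i ∈ (range T).erase j', b i * leakageKernel n (i / T - j' / T)
  have hsplit : ydft (j' / T) ω = b j' + S + εdft (j' / T) ω := by
    rw [hydft, hεdft]
    simp only [add_mul, sum_add_distrib, hμ]
    rw [mul_add, dft_trigSum_eq_sum_mul_leakageKernel, ← add_sum_erase _ _ (mem_range.2 hj'),
      sub_self, leakageKernel_zero hn.ne', mul_one]
  have hnoise : ‖εdft (j' / T) ω‖ ≤ ⨆ v ∈ Set.Icc (0 : ℝ) (1 / 2), ‖εdft v ω‖ :=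
    le_biSup_of_forall_le (fun v _ => (hεdft v ω).symm ▸ norm_dft_le n (ε · ω) v)
      (show (j' : ℝ) / T ∈ Set.Icc 0 (1 / 2) from ⟨by positivity, hhalf⟩)
  have htriangle : ‖b j'‖ ≤ ‖ydft (j' / T) ω‖ + ‖S‖ + ‖εdft (j' / T) ω‖ := by
    rw [show b j' = ydft (j' / T) ω - S - εdft (j' / T) ω by rw [hsplit]; ring]
    exact (norm_sub_le _ _).trans (by gcongr; exact norm_sub_le _ _)
  linarith [norm_sum_mul_leakageKernel_le hg hgT hj' hb]

/-- Pointwise lower bound on the periodogram at a present frequency: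
for every `j'` with `0 ≤ j' ≤ T−1`, `b_{j'} ≠ 0` and `j'/T ≤ 1/2`,
`|ỹ(j'/T)| ≥ |b_{j'}| − π B U₂ − sup_{v∈[0,1/2]} |ε̃(v)|`. -/
theorem periodogram_lower_bound_at_present_frequency
    {Ω : Type*} [MeasureSpace Ω] (hP : IsProbabilityMeasure (ℙ : Measure Ω))
    (n : ℕ) (hn : 0 < n) (σ : ℝ) (hσ : 0 < σ)
    (ε : Fin n → Ω → ℝ)
    (hmeas : ∀ t, Measurable (ε t))
    (hindep : iIndepFun ε ℙ)
    (hsubg : ∀ t (l : ℝ), ∫ ω, Real.exp (l * ε t ω) ∂ℙ ≤ Real.exp (σ ^ 2 * l ^ 2 / 2))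
    (εdft : ℝ → Ω → ℂ)
    (hεdft : ∀ v ω, εdft v ω = (1 / (n : ℂ)) *
        ∑ t : Fin n, (ε t ω : ℂ) * Complex.exp (-(2 * Real.pi * Complex.I * v * ((t : ℕ) + 1))))
    (g T : ℕ) (hg2 : 2 ≤ g) (hgn : Real.sqrt n ≤ g)
    (hT : 0 < T) (hTn : (T : ℝ) < n / (2 * g))
    (b : ℕ → ℂ)
    (hb0 : (b 0).im = 0)
    (hbconj : ∀ j, 1 ≤ j → j ≤ T - 1 → b j = starRingEnd ℂ (b (T - j)))
    (hbne : ∃ j < T, b j ≠ 0)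
    (μ : ℕ → ℂ)
    (hμ : ∀ t, μ t = ∑ j ∈ Finset.range T,
        b j * Complex.exp (2 * Real.pi * Complex.I * j * t / T))
    (ydft : ℝ → Ω → ℂ)
    (hydft : ∀ v ω, ydft v ω = (1 / (n : ℂ)) *
        ∑ t : Fin n, (μ ((t : ℕ) + 1) + (ε t ω : ℂ)) *
          Complex.exp (-(2 * Real.pi * Complex.I * v * ((t : ℕ) + 1))))
    (B : ℝ) (hB : IsGreatest {x : ℝ | ∃ j < T, b j ≠ 0 ∧ x = ‖b j‖} B) :
    ∀ ω : Ω, ∀ j' : ℕ, j' < T → b j' ≠ 0 → (j' : ℝ) / T ≤ 1 / 2 →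
      ‖b j'‖ - Real.pi * B * leakageU₂ n g -
          (⨆ v ∈ Set.Icc (0 : ℝ) (1 / 2), ‖εdft v ω‖) ≤
        ‖ydft ((j' : ℝ) / T) ω‖ :=
  periodogram_lower_bound_at_present_frequency_general n hn ε εdft hεdft g T hg2 hTn b μ hμ ydft
    hydft B hB
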